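/- For every integer L ≥ 3, let R_L be the vacuum graph with L loops consisting of L−1 four-valent vertices arranged in a cycle, with consecutive vertices joined by double edges (for L = 3 this is two vertices joined by four parallel edges). Then the circuit partition polynomial satisfies J(R_L, N) = 2^{L−2}(N−1)(N+2) + (N+2)^{L−1}. -/

import Mathlib

/-- A finite multigraph presented by half-edges: `vtx h` is the vertex at which the
half-edge `h` is attached, and `edg` is an involution pairing the two half-edges of
each internal edge; its fixed points are the external half-edges. -/
structure HGraph where
  V : Type
  H : Type
  fintypeV : Fintype V
  fintypeH : Fintype H
  decEqV : DecidableEq V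
  decEqH : DecidableEq H
  vtx : H → V
  edg : H → H
  edg_invol : ∀ h, edg (edg h) = h

attribute [instance] HGraph.fintypeV HGraph.fintypeH HGraph.decEqV HGraph.decEqH

namespace HGraph

variable (G : HGraph)

/-- A half-edge is external if the edge involution fixes it. -/
def IsExternal (h : G.H) : Prop := G.edg h = h

instance : DecidablePred G.IsExternal := fun h => inferInstanceAs (Decidable (G.edg h = h))

/-- The valence of a vertex: the number of half-edges incident to it. -/
def valence (v : G.V) : ℕ := Fintype.card {h : G.H // G.vtx h = v}

/-- The number of external half-edges. -/
def extCard : ℕ := Fintype.card {h : G.H // G.IsExternal h}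

/-- A vacuum graph has no external half-edges. -/
def IsVacuum : Prop := ∀ h : G.H, ¬ G.IsExternal h

/-- A decomposition of a graph: at every vertex, a partition of the incident
half-edges into pairs (encoded as a fixed-point-free involution fixing each vertex). -/
def Decomp : Type :=
  {p : G.H → G.H //
    (∀ h, p (p h) = h) ∧ (∀ h, p h ≠ h) ∧ ∀ h, G.vtx (p h) = G.vtx h}

instance : Fintype G.Decomp :=
  inferInstanceAs (Fintype {p : G.H → G.H //
    (∀ h, p (p h) = h) ∧ (∀ h, p h ≠ h) ∧ ∀ h, G.vtx (p h) = G.vtx h})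

/-- Two half-edges are one step apart (relative to a decomposition `d`) if they are
joined by an edge or paired at a vertex by `d`. -/
def dstep (d : G.Decomp) (h h' : G.H) : Prop := G.edg h = h' ∨ d.1 h = h'

/-- The circuits and paths of a decomposition are the equivalence classes of the
relation generated by `dstep`. -/
def dsetoid (d : G.Decomp) : Setoid G.H :=
  ⟨Relation.EqvGen (G.dstep d), Relation.EqvGen.is_equivalence _⟩

/-- The type of circuits/paths of a decomposition. -/
def Circuits (d : G.Decomp) : Type := Quotient (G.dsetoid d)

def circuitOf (d : G.Decomp) (h : G.H) : G.Circuits d := Quotient.mk (G.dsetoid d) h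

/-- A circuit is closed if it contains no external half-edge (otherwise it is an
open path ending at external half-edges). -/
def IsClosed (d : G.Decomp) (c : G.Circuits d) : Prop :=
  ∀ h : G.H, G.circuitOf d h = c → ¬ G.IsExternal h

/-- The number of closed circuits of a decomposition. -/
noncomputable def ncircuits (d : G.Decomp) : ℕ :=
  Nat.card {c : G.Circuits d // G.IsClosed d c}

/-- The circuit partition polynomial `J(G,N)`: the sum over all decompositions of
`N` raised to the number of closed circuits. -/
noncomputable def J : Polynomial ℤ :=
  ∑ d : G.Decomp, (Polynomial.X : Polynomial ℤ) ^ G.ncircuits d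

/-- The O(N) symmetry factor `T(G,N) = J(G,N)/J(G,1)`. -/
noncomputable def T : Polynomial ℚ :=
  Polynomial.C (((G.J.eval 1 : ℤ) : ℚ))⁻¹ * G.J.map (Int.castRingHom ℚ)

/-- Two vertices are adjacent if some edge connects them. -/
def adj (v w : G.V) : Prop := ∃ h : G.H, G.vtx h = v ∧ G.vtx (G.edg h) = w

/-- The graph is connected. -/
def Connected : Prop := ∀ v w : G.V, Relation.ReflTransGen G.adj v w

/-- An `L`-loop completion: a connected 4-regular vacuum graph with `L+2` vertices. -/
def IsCompletion (L : ℕ) : Prop :=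
  G.IsVacuum ∧ G.Connected ∧ (∀ v, G.valence v = 4) ∧ Fintype.card G.V = L + 2

/-- The number of edges crossing from `S` to its complement. -/
def cutSize (S : Finset G.V) : ℕ :=
  (Finset.univ.filter fun h : G.H => G.vtx h ∈ S ∧ G.vtx (G.edg h) ∉ S).card

/-- The induced subgraph on `S` contains a cycle: there is a nonempty set of
internal half-edges inside `S`, closed under the edge involution, in which every
incident vertex meets at least two of these half-edges. -/
def HasCycleIn (S : Set G.V) : Prop :=
  ∃ E : Finset G.H, E.Nonempty ∧
    (∀ h ∈ E, G.vtx h ∈ S ∧ ¬ G.IsExternal h ∧ G.edg h ∈ E) ∧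
    ∀ h ∈ E, 2 ≤ (E.filter fun h' => G.vtx h' = G.vtx h).card

/-- Cyclic 6-edge-connectivity: every edge cut separating two subgraphs which each
contain a cycle has at least 6 edges. -/
def CyclicallySixEdgeConnected : Prop :=
  ∀ S : Finset G.V, G.HasCycleIn ↑S → G.HasCycleIn ↑(Sᶜ) → 6 ≤ G.cutSize S

/-- A primitive `L`-loop completion. -/
def IsPrimitiveCompletion (L : ℕ) : Prop :=
  G.IsCompletion L ∧ G.CyclicallySixEdgeConnected

end HGraph

/-- Isomorphism of half-edge multigraphs. -/
structure HGraph.Iso (G₁ G₂ : HGraph) where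
  eV : G₁.V ≃ G₂.V
  eH : G₁.H ≃ G₂.H
  vtx_eq : ∀ h, G₂.vtx (eH h) = eV (G₁.vtx h)
  edg_eq : ∀ h, G₂.edg (eH h) = eH (G₁.edg h)

/-- Two graphs are isomorphic. -/
def HGraph.IsIsomorphic (G₁ G₂ : HGraph) : Prop := Nonempty (HGraph.Iso G₁ G₂)
/-- A ring of `n` four-valent vertices arranged in a cycle, consecutive vertices
joined by double edges. -/
def ringGraph (n : ℕ) (hn : 1 ≤ n) : HGraph :=
  haveI : NeZero n := ⟨by omega⟩
  { V := Fin n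
    H := Fin n × Fin 4
    fintypeV := inferInstance
    fintypeH := inferInstance
    decEqV := inferInstance
    decEqH := inferInstance
    vtx := Prod.fst
    edg := fun q => ![ ((q.1 - 1 : Fin n), (2 : Fin 4)), (q.1 - 1, 3),
                       (q.1 + 1, 0), (q.1 + 1, 1) ] q.2
    edg_invol := by
      rintro ⟨i, j⟩
      have hsub : i - 1 + 1 = i := sub_add_cancel i 1
      have hadd : i + 1 - 1 = i := add_sub_cancel_right i 1
      fin_cases j <;> simp_all }

namespace RingAux

def mat : Fin 3 → Fin 4 → Fin 4 := ![![1,0,3,2], ![2,3,0,1], ![3,2,1,0]]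

theorem mat_invol : ∀ (k : Fin 3) (j : Fin 4), mat k (mat k j) = j := by decide
theorem mat_fpf : ∀ (k : Fin 3) (j : Fin 4), mat k j ≠ j := by decide

variable {n : ℕ} [NeZero n]

theorem edg0 (hn : 1 ≤ n) (i : Fin n) : (ringGraph n hn).edg (i, 0) = (i - 1, 2) := rfl
theorem edg1 (hn : 1 ≤ n) (i : Fin n) : (ringGraph n hn).edg (i, 1) = (i - 1, 3) := rfl
theorem edg2 (hn : 1 ≤ n) (i : Fin n) : (ringGraph n hn).edg (i, 2) = (i + 1, 0) := rfl
theorem edg3 (hn : 1 ≤ n) (i : Fin n) : (ringGraph n hn).edg (i, 3) = (i + 1, 1) := rfl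

def D (hn : 1 ≤ n) (u : Fin n → Fin 3) : (ringGraph n hn).Decomp :=
  ⟨fun h => (h.1, mat (u h.1) h.2),
   ⟨fun h => by
      obtain ⟨i, j⟩ := h
      show (i, mat (u i) (mat (u i) j)) = (i, j)
      rw [mat_invol],
    fun h hc => mat_fpf (u h.1) h.2 (congrArg Prod.snd hc),
    fun h => rfl⟩⟩

set_option maxRecDepth 100000 in
theorem classify : ∀ q : Fin 4 → Fin 4, (∀ j, q (q j) = j) → (∀ j, q j ≠ j) →
    q = mat 0 ∨ q = mat 1 ∨ q = mat 2 := by decide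

end RingAux
set_option linter.unusedSectionVars false

namespace RingAux2
open RingAux

variable {n : ℕ} [NeZero n]

/-- The local matching of a decomposition at vertex `i`. -/
def locq (hn : 1 ≤ n) (d : (ringGraph n hn).Decomp) (i : Fin n) : Fin 4 → Fin 4 :=
  fun j => (d.1 (i, j)).2

theorem locq_spec (hn : 1 ≤ n) (d : (ringGraph n hn).Decomp) (i : Fin n) (j : Fin 4) :
    d.1 (i, j) = (i, locq hn d i j) := by
  have h1 : (d.1 (i, j)).1 = i := d.2.2.2 (i, j)
  exact Prod.ext h1 rfl

theorem locq_classify (hn : 1 ≤ n) (d : (ringGraph n hn).Decomp) (i : Fin n) :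
    locq hn d i = mat 0 ∨ locq hn d i = mat 1 ∨ locq hn d i = mat 2 := by
  apply classify
  · intro j
    show (d.1 (i, locq hn d i j)).2 = j
    rw [← locq_spec hn d i j, d.2.1 (i, j)]
  · intro j hc
    exact d.2.2.1 (i, j) (by rw [locq_spec hn d i j, hc])

def Uinv (hn : 1 ≤ n) (d : (ringGraph n hn).Decomp) : Fin n → Fin 3 :=
  fun i => ![0, 0, 1, 2] (locq hn d i 0)

theorem left_inv (hn : 1 ≤ n) (u : Fin n → Fin 3) : Uinv hn (D hn u) = u := by
  funext i
  show ![0, 0, 1, 2] (mat (u i) 0) = u i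
  have : ∀ k : Fin 3, ![(0:Fin 3), 0, 1, 2] (mat k 0) = k := by decide
  exact this (u i)

theorem right_inv (hn : 1 ≤ n) (d : (ringGraph n hn).Decomp) : D hn (Uinv hn d) = d := by
  apply Subtype.ext
  funext h
  obtain ⟨i, j⟩ := h
  show (i, mat (Uinv hn d i) j) = d.1 (i, j)
  rw [locq_spec hn d i j]
  have key : ∀ k : Fin 3, ![(0:Fin 3), 0, 1, 2] (mat k 0) = k := by decide
  rcases locq_classify hn d i with hq | hq | hq <;>
    simp only [Uinv, hq, key]

def UEquiv (hn : 1 ≤ n) : (Fin n → Fin 3) ≃ (ringGraph n hn).Decomp :=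
  ⟨D hn, Uinv hn, left_inv hn, right_inv hn⟩

end RingAux2
namespace RingAux3
open RingAux RingAux2

set_option linter.unusedSectionVars false

/-- Counting equivalence classes via an explicit labelling. -/
theorem class_count {α : Type} (s : Setoid α) {F : Type} [Fintype F]
    (f : α → F) (rep : F → α)
    (hf : ∀ a b, s.r a b → f a = f b) (hrep : ∀ x, f (rep x) = x)
    (hconn : ∀ a, s.r a (rep (f a))) :
    Nat.card (Quotient s) = Fintype.card F := by
  have e : Quotient s ≃ F :=
    { toFun := Quotient.lift f hf
      invFun := fun x => Quotient.mk s (rep x)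
      left_inv := by
        refine Quotient.ind ?_
        intro a
        exact Quotient.sound (Setoid.symm (hconn a))
      right_inv := fun x => hrep x }
  rw [Nat.card_congr e, Nat.card_eq_fintype_card]

theorem eqvgen_lift {α β : Type} {r : α → α → Prop} {f : α → β}
    (hf : ∀ a b, r a b → f a = f b) :
    ∀ a b, Relation.EqvGen r a b → f a = f b := by
  intro a b h
  induction h with
  | rel x y hxy => exact hf x y hxy
  | refl => rfl
  | symm x y _ ih => exact ih.symm
  | trans x y z _ _ ih1 ih2 => exact ih1.trans ih2

variable {n : ℕ} [NeZero n]

theorem edg_snd (hn : 1 ≤ n) (i : Fin n) (j : Fin 4) :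
    ((ringGraph n hn).edg (i, j)).2 = ![(2 : Fin 4), 3, 0, 1] j := by
  fin_cases j <;> rfl

theorem ring_vacuum (hn : 1 ≤ n) : (ringGraph n hn).IsVacuum := by
  rintro ⟨i, j⟩ hE
  have hE' : (ringGraph n hn).edg (i, j) = (i, j) := hE
  have h2 : ![(2 : Fin 4), 3, 0, 1] j = j := by
    rw [← edg_snd hn i j, hE']
  have hne : ∀ j : Fin 4, ![(2 : Fin 4), 3, 0, 1] j ≠ j := by decide
  exact hne j h2

theorem nc_eq (hn : 1 ≤ n) (d : (ringGraph n hn).Decomp) :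
    (ringGraph n hn).ncircuits d = Nat.card ((ringGraph n hn).Circuits d) := by
  unfold HGraph.ncircuits
  exact Nat.card_congr (Equiv.subtypeUnivEquiv (fun c h _ => ring_vacuum hn h))

/-- The equivalence relation of a decomposition coming from `u`. -/
def Rl (hn : 1 ≤ n) (u : Fin n → Fin 3) (a b : Fin n × Fin 4) : Prop :=
  Relation.EqvGen ((ringGraph n hn).dstep (D hn u)) a b

theorem Rl.re {hn : 1 ≤ n} {u : Fin n → Fin 3} {a b : Fin n × Fin 4}
    (hab : (ringGraph n hn).edg a = b) : Rl hn u a b :=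
  Relation.EqvGen.rel _ _ (Or.inl hab)

theorem Rl.rp {hn : 1 ≤ n} {u : Fin n → Fin 3} {a b : Fin n × Fin 4}
    (hab : (a.1, mat (u a.1) a.2) = b) : Rl hn u a b :=
  Relation.EqvGen.rel _ _ (Or.inr hab)

theorem Rl.trans {hn : 1 ≤ n} {u : Fin n → Fin 3} {a b c : Fin n × Fin 4}
    (h1 : Rl hn u a b) (h2 : Rl hn u b c) : Rl hn u a c :=
  Relation.EqvGen.trans _ _ _ h1 h2

theorem Rl.symm {hn : 1 ≤ n} {u : Fin n → Fin 3} {a b : Fin n × Fin 4}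
    (h1 : Rl hn u a b) : Rl hn u b a :=
  Relation.EqvGen.symm _ _ h1

theorem Rl.refl {hn : 1 ≤ n} (u : Fin n → Fin 3) (a : Fin n × Fin 4) : Rl hn u a a :=
  Relation.EqvGen.refl _

section CaseA
open Fin.NatCast Fin.CommRing

variable (u : Fin n → Fin 3)

theorem exd (hS : ∃ s, u s = 0) (i : Fin n) : ∃ m : ℕ, u (i - (m : Fin n)) = 0 := by
  obtain ⟨s, hs⟩ := hS
  refine ⟨(i - s).val, ?_⟩
  rw [Fin.cast_val_eq_self, sub_sub_cancel]
  exact hs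

def dist (hS : ∃ s, u s = 0) (i : Fin n) : ℕ := Nat.find (exd u hS i)

def base (hS : ∃ s, u s = 0) (i : Fin n) : Fin n := i - ((dist u hS i : ℕ) : Fin n)

theorem base_spec (hS : ∃ s, u s = 0) (i : Fin n) : u (base u hS i) = 0 :=
  Nat.find_spec (exd u hS i)

theorem base_eq_self (hS : ∃ s, u s = 0) {i : Fin n} (hi : u i = 0) :
    base u hS i = i := by
  have h0 : dist u hS i = 0 := by
    rw [dist, Nat.find_eq_zero]
    simpa using hi
  rw [base, h0]
  simp

theorem dist_step (hS : ∃ s, u s = 0) {i : Fin n} (hi : u i ≠ 0) :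
    dist u hS i = dist u hS (i - 1) + 1 := by
  rw [dist, Nat.find_eq_iff]
  constructor
  · have : i - (((dist u hS (i - 1) + 1 : ℕ)) : Fin n) = (i - 1) - ((dist u hS (i-1) : ℕ) : Fin n) := by
      push_cast
      ring
    rw [this]
    exact Nat.find_spec (exd u hS (i - 1))
  · intro k hk
    match k with
    | 0 => simpa using hi
    | (k' + 1) =>
      have hlt : k' < dist u hS (i - 1) := by omega
      have h := Nat.find_min (exd u hS (i - 1)) hlt
      have heq : i - (((k' + 1 : ℕ)) : Fin n) = (i - 1) - ((k' : ℕ) : Fin n) := by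
        push_cast
        ring
      rw [heq]
      exact h

theorem base_step (hS : ∃ s, u s = 0) {i : Fin n} (hi : u i ≠ 0) :
    base u hS i = base u hS (i - 1) := by
  rw [base, base, dist_step u hS hi]
  push_cast
  ring

theorem connA (hn : 1 ≤ n) (hS : ∃ s, u s = 0) :
    ∀ (m : ℕ) (i : Fin n), dist u hS i = m →
    Rl hn u (i, 2) (base u hS i, 2) ∧ Rl hn u (i, 3) (base u hS i, 2) ∧
    (u i ≠ 0 → Rl hn u (i, 0) (base u hS i, 2) ∧ Rl hn u (i, 1) (base u hS i, 2)) := by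
  intro m
  induction m using Nat.strong_induction_on with
  | _ m IH =>
  intro i him
  by_cases hi : u i = 0
  · have hb : base u hS i = i := base_eq_self u hS hi
    rw [hb]
    refine ⟨Rl.refl u _, ?_, fun hne => absurd hi hne⟩
    apply Rl.rp
    show (i, mat (u i) 3) = (i, 2)
    rw [hi]
    exact congrArg (fun x => (i, x)) (by decide)
  · have hds : dist u hS i = dist u hS (i - 1) + 1 := dist_step u hS hi
    have hbs : base u hS i = base u hS (i - 1) := base_step u hS hi
    have hIH := IH (dist u hS (i - 1)) (by omega) (i - 1) rfl
    have h0 : Rl hn u (i, 0) (base u hS i, 2) := by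
      rw [hbs]
      exact Rl.trans (Rl.re (edg0 hn i)) hIH.1
    have h1 : Rl hn u (i, 1) (base u hS i, 2) := by
      rw [hbs]
      exact Rl.trans (Rl.re (edg1 hn i)) hIH.2.1
    have hui : u i = 1 ∨ u i = 2 := by
      have : ∀ k : Fin 3, k ≠ 0 → k = 1 ∨ k = 2 := by decide
      exact this _ hi
    have h2 : Rl hn u (i, 2) (base u hS i, 2) := by
      rcases hui with h | h
      · exact Rl.trans (Rl.rp (show (i, mat (u i) 2) = (i, 0) by
          rw [h]; exact congrArg (fun x => (i, x)) (by decide))) h0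
      · exact Rl.trans (Rl.rp (show (i, mat (u i) 2) = (i, 1) by
          rw [h]; exact congrArg (fun x => (i, x)) (by decide))) h1
    have h3 : Rl hn u (i, 3) (base u hS i, 2) := by
      rcases hui with h | h
      · exact Rl.trans (Rl.rp (show (i, mat (u i) 3) = (i, 1) by
          rw [h]; exact congrArg (fun x => (i, x)) (by decide))) h1
      · exact Rl.trans (Rl.rp (show (i, mat (u i) 3) = (i, 0) by
          rw [h]; exact congrArg (fun x => (i, x)) (by decide))) h0
    exact ⟨h2, h3, fun _ => ⟨h0, h1⟩⟩

end CaseA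
end RingAux3
namespace RingAux3
open RingAux RingAux2

variable {n : ℕ} [NeZero n] (u : Fin n → Fin 3)

def SU (u : Fin n → Fin 3) : Finset (Fin n) := Finset.univ.filter (fun i => u i = 0)

theorem base_mem (hS : ∃ s, u s = 0) (i : Fin n) : base u hS i ∈ SU u :=
  Finset.mem_filter.mpr ⟨Finset.mem_univ _, base_spec u hS i⟩

def fAval (hS : ∃ s, u s = 0) : Fin n × Fin 4 → Fin n := fun h =>
  if u h.1 = 0 ∧ (h.2 = 0 ∨ h.2 = 1) then base u hS (h.1 - 1) else base u hS h.1

theorem fAval_def (hS : ∃ s, u s = 0) (i : Fin n) (j : Fin 4) :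
    fAval u hS (i, j) =
      if u i = 0 ∧ (j = 0 ∨ j = 1) then base u hS (i - 1) else base u hS i := rfl

theorem fAval_mem (hS : ∃ s, u s = 0) (h : Fin n × Fin 4) : fAval u hS h ∈ SU u := by
  unfold fAval
  split_ifs <;> exact base_mem u hS _

def fA (hS : ∃ s, u s = 0) : Fin n × Fin 4 → {x // x ∈ SU u} := fun h =>
  ⟨fAval u hS h, fAval_mem u hS h⟩

theorem fA_e0 (hS : ∃ s, u s = 0) (i : Fin n) : fA u hS (i, 0) = fA u hS (i - 1, 2) := by
  apply Subtype.ext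
  show fAval u hS (i, 0) = fAval u hS (i - 1, 2)
  rw [fAval_def, fAval_def]
  by_cases hi : u i = 0
  · rw [if_pos ⟨hi, Or.inl rfl⟩, if_neg (fun hc => absurd hc.2 (by decide))]
  · rw [if_neg (fun hc => hi hc.1), if_neg (fun hc => absurd hc.2 (by decide))]
    exact base_step u hS hi

theorem fA_e1 (hS : ∃ s, u s = 0) (i : Fin n) : fA u hS (i, 1) = fA u hS (i - 1, 3) := by
  apply Subtype.ext
  show fAval u hS (i, 1) = fAval u hS (i - 1, 3)
  rw [fAval_def, fAval_def]
  by_cases hi : u i = 0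
  · rw [if_pos ⟨hi, Or.inr rfl⟩, if_neg (fun hc => absurd hc.2 (by decide))]
  · rw [if_neg (fun hc => hi hc.1), if_neg (fun hc => absurd hc.2 (by decide))]
    exact base_step u hS hi

theorem fA_e2 (hS : ∃ s, u s = 0) (i : Fin n) : fA u hS (i, 2) = fA u hS (i + 1, 0) := by
  apply Subtype.ext
  show fAval u hS (i, 2) = fAval u hS (i + 1, 0)
  rw [fAval_def, fAval_def, if_neg (fun hc => absurd hc.2 (by decide))]
  by_cases hi : u (i + 1) = 0
  · rw [if_pos ⟨hi, Or.inl rfl⟩, add_sub_cancel_right]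
  · rw [if_neg (fun hc => hi hc.1), base_step u hS hi, add_sub_cancel_right]

theorem fA_e3 (hS : ∃ s, u s = 0) (i : Fin n) : fA u hS (i, 3) = fA u hS (i + 1, 1) := by
  apply Subtype.ext
  show fAval u hS (i, 3) = fAval u hS (i + 1, 1)
  rw [fAval_def, fAval_def, if_neg (fun hc => absurd hc.2 (by decide))]
  by_cases hi : u (i + 1) = 0
  · rw [if_pos ⟨hi, Or.inr rfl⟩, add_sub_cancel_right]
  · rw [if_neg (fun hc => hi hc.1), base_step u hS hi, add_sub_cancel_right]

theorem fA_p (hS : ∃ s, u s = 0) (i : Fin n) (j : Fin 4) :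
    fA u hS (i, j) = fA u hS (i, mat (u i) j) := by
  apply Subtype.ext
  show fAval u hS (i, j) = fAval u hS (i, mat (u i) j)
  rw [fAval_def, fAval_def]
  have h3 : ∀ k : Fin 3, k = 0 ∨ k = 1 ∨ k = 2 := by decide
  rcases h3 (u i) with h | h | h <;> rw [h] <;> fin_cases j <;>
    exact if_congr (by decide) rfl rfl

theorem fA_dstep (hn : 1 ≤ n) (hS : ∃ s, u s = 0) :
    ∀ a b, (ringGraph n hn).dstep (D hn u) a b → fA u hS a = fA u hS b := by
  rintro ⟨i, j⟩ b (rfl | rfl)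
  · fin_cases j
    · exact fA_e0 u hS i
    · exact fA_e1 u hS i
    · exact fA_e2 u hS i
    · exact fA_e3 u hS i
  · exact fA_p u hS i j

theorem conn_j0 (hn : 1 ≤ n) (hS : ∃ s, u s = 0) (i : Fin n) :
    Rl hn u (i, 0) (fAval u hS (i, 0), 2) := by
  rw [fAval_def]
  by_cases hi : u i = 0
  · rw [if_pos ⟨hi, Or.inl rfl⟩]
    exact Rl.trans (Rl.re (edg0 hn i)) (connA u hn hS _ (i - 1) rfl).1
  · rw [if_neg (fun hc => hi hc.1)]
    exact ((connA u hn hS _ i rfl).2.2 hi).1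

theorem conn_j1 (hn : 1 ≤ n) (hS : ∃ s, u s = 0) (i : Fin n) :
    Rl hn u (i, 1) (fAval u hS (i, 1), 2) := by
  rw [fAval_def]
  by_cases hi : u i = 0
  · rw [if_pos ⟨hi, Or.inr rfl⟩]
    exact Rl.trans (Rl.re (edg1 hn i)) (connA u hn hS _ (i - 1) rfl).2.1
  · rw [if_neg (fun hc => hi hc.1)]
    exact ((connA u hn hS _ i rfl).2.2 hi).2

theorem conn_j2 (hn : 1 ≤ n) (hS : ∃ s, u s = 0) (i : Fin n) :
    Rl hn u (i, 2) (fAval u hS (i, 2), 2) := by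
  rw [fAval_def, if_neg (fun hc => absurd hc.2 (by decide))]
  exact (connA u hn hS _ i rfl).1

theorem conn_j3 (hn : 1 ≤ n) (hS : ∃ s, u s = 0) (i : Fin n) :
    Rl hn u (i, 3) (fAval u hS (i, 3), 2) := by
  rw [fAval_def, if_neg (fun hc => absurd hc.2 (by decide))]
  exact (connA u hn hS _ i rfl).2.1

theorem fA_conn (hn : 1 ≤ n) (hS : ∃ s, u s = 0) (a : Fin n × Fin 4) :
    Rl hn u a ((((fA u hS a) : Fin n), 2) : Fin n × Fin 4) := by
  obtain ⟨i, j⟩ := a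
  fin_cases j
  · exact conn_j0 u hn hS i
  · exact conn_j1 u hn hS i
  · exact conn_j2 u hn hS i
  · exact conn_j3 u hn hS i

theorem ncA (hn : 1 ≤ n) (hS : ∃ s, u s = 0) :
    (ringGraph n hn).ncircuits (D hn u) = (SU u).card := by
  rw [nc_eq hn]
  have h := class_count ((ringGraph n hn).dsetoid (D hn u)) (fA u hS)
      (fun x => (((x : Fin n), 2) : Fin n × Fin 4))
      (eqvgen_lift (fA_dstep u hn hS))
      (fun x => by
        apply Subtype.ext
        show fAval u hS ((x : Fin n), 2) = (x : Fin n)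
        rw [fAval_def, if_neg (fun hc => absurd hc.2 (by decide))]
        exact base_eq_self u hS ((Finset.mem_filter.mp x.2).2))
      (fA_conn u hn hS)
  rw [show (ringGraph n hn).Circuits (D hn u) =
      Quotient ((ringGraph n hn).dsetoid (D hn u)) from rfl, h, Fintype.card_coe]

end RingAux3
namespace RingAux3
open RingAux RingAux2

set_option linter.unusedSectionVars false

variable {n : ℕ} [NeZero n] (u : Fin n → Fin 3)

/-- number of crossing vertices strictly below `i`. -/
def cb (i : Fin n) : ℕ := (Finset.univ.filter (fun k : Fin n => k.val < i.val ∧ u k = 2)).card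

/-- total number of crossing vertices. -/
def CCr (u : Fin n → Fin 3) : ℕ := (Finset.univ.filter (fun k : Fin n => u k = 2)).card

def ca (i : Fin n) : Bool := decide (Odd (cb u i))

def crs (i : Fin n) : Bool := decide (u i = 2)

def bitv (c : Bool) : Fin 4 → Bool := ![false, true, c, !c]

def fBval : Fin n × Fin 4 → Bool := fun h => Bool.xor (ca u h.1) (bitv (crs u h.1) h.2)

theorem valSucc {i : Fin n} (hlt : i.val + 1 < n) : (i + 1).val = i.val + 1 := by
  have h1 : (1 : Fin n).val = 1 := by
    rw [Fin.val_one']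
    exact Nat.mod_eq_of_lt (by omega)
  rw [Fin.val_add, h1]
  exact Nat.mod_eq_of_lt hlt

theorem cb_succ {i : Fin n} (hlt : i.val + 1 < n) :
    cb u (i + 1) = cb u i + (if u i = 2 then 1 else 0) := by
  unfold cb
  have hset : (Finset.univ.filter (fun k : Fin n => k.val < (i + 1).val ∧ u k = 2)) =
      (Finset.univ.filter (fun k : Fin n => k.val < i.val ∧ u k = 2)) ∪
      (Finset.univ.filter (fun k : Fin n => k = i ∧ u k = 2)) := by
    ext k
    simp only [Finset.mem_filter, Finset.mem_union, Finset.mem_univ, true_and, valSucc hlt]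
    constructor
    · rintro ⟨hk, h2⟩
      rcases Nat.lt_succ_iff_lt_or_eq.mp hk with h | h
      · exact Or.inl ⟨h, h2⟩
      · exact Or.inr ⟨Fin.ext h, h2⟩
    · rintro (⟨hk, h2⟩ | ⟨rfl, h2⟩)
      · exact ⟨by omega, h2⟩
      · exact ⟨by omega, h2⟩
  rw [hset, Finset.card_union_of_disjoint]
  · congr 1
    split_ifs with h
    · rw [show (Finset.univ.filter (fun k : Fin n => k = i ∧ u k = 2)) = {i} from by
        ext k
        simp only [Finset.mem_filter, Finset.mem_univ, true_and, Finset.mem_singleton]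
        exact ⟨fun hc => hc.1, fun hc => ⟨hc, hc ▸ h⟩⟩]
      rfl
    · rw [show (Finset.univ.filter (fun k : Fin n => k = i ∧ u k = 2)) = ∅ from by
        ext k
        simp only [Finset.mem_filter, Finset.mem_univ, true_and, Finset.notMem_empty,
          iff_false, not_and]
        rintro rfl
        exact h]
      rfl
  · rw [Finset.disjoint_left]
    intro k hk1 hk2
    rw [Finset.mem_filter] at hk1 hk2
    obtain rfl := hk2.2.1
    omega

theorem ca_succ {i : Fin n} (hlt : i.val + 1 < n) :
    ca u (i + 1) = Bool.xor (ca u i) (crs u i) := by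
  unfold ca crs
  rw [cb_succ u hlt]
  by_cases h : u i = 2 <;> by_cases ho : Odd (cb u i) <;>
    simp [h, ho, Nat.odd_add_one]

theorem ca_zero : ca u 0 = false := by
  unfold ca cb
  rw [show (Finset.univ.filter (fun k : Fin n => k.val < (0 : Fin n).val ∧ u k = 2)) = ∅ from by
    ext k
    simp]
  simp [Nat.odd_iff]

def lastF : Fin n := ⟨n - 1, by have := Nat.pos_of_ne_zero (NeZero.ne n); omega⟩

theorem last_add_one : (lastF : Fin n) + 1 = 0 := by
  have hpos := Nat.pos_of_ne_zero (NeZero.ne n)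
  apply Fin.ext
  rw [Fin.val_add, Fin.val_one']
  show ((n - 1) + 1 % n) % n = (0 : Fin n).val
  rcases Nat.lt_or_ge 1 n with h | h
  · rw [Nat.mod_eq_of_lt h, Nat.sub_add_cancel hpos, Nat.mod_self]
    simp
  · have hn1 : n = 1 := by omega
    subst hn1
    simp

theorem cb_last_total : CCr u = cb u (lastF : Fin n) + (if u (lastF : Fin n) = 2 then 1 else 0) := by
  unfold CCr cb
  have hset : (Finset.univ.filter (fun k : Fin n => u k = 2)) =
      (Finset.univ.filter (fun k : Fin n => k.val < (lastF : Fin n).val ∧ u k = 2)) ∪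
      (Finset.univ.filter (fun k : Fin n => k = lastF ∧ u k = 2)) := by
    ext k
    simp only [Finset.mem_filter, Finset.mem_union, Finset.mem_univ, true_and]
    constructor
    · intro h2
      have hkv : k.val < n := k.isLt
      rcases Nat.lt_or_ge k.val (n - 1) with h | h
      · exact Or.inl ⟨h, h2⟩
      · refine Or.inr ⟨Fin.ext ?_, h2⟩
        show k.val = n - 1
        omega
    · rintro (⟨_, h2⟩ | ⟨_, h2⟩) <;> exact h2
  rw [hset, Finset.card_union_of_disjoint]
  · congr 1
    split_ifs with h
    · rw [show (Finset.univ.filter (fun k : Fin n => k = lastF ∧ u k = 2)) = {lastF} from by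
        ext k
        simp only [Finset.mem_filter, Finset.mem_univ, true_and, Finset.mem_singleton]
        exact ⟨fun hc => hc.1, fun hc => ⟨hc, hc ▸ h⟩⟩]
      rfl
    · rw [show (Finset.univ.filter (fun k : Fin n => k = lastF ∧ u k = 2)) = ∅ from by
        ext k
        simp only [Finset.mem_filter, Finset.mem_univ, true_and, Finset.notMem_empty,
          iff_false, not_and]
        rintro rfl
        exact h]
      rfl
  · rw [Finset.disjoint_left]
    intro k hk1 hk2
    rw [Finset.mem_filter] at hk1 hk2
    obtain rfl := hk2.2.1
    have := hk1.2.1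
    omega

theorem xor_last : Bool.xor (ca u (lastF : Fin n)) (crs u (lastF : Fin n)) = decide (Odd (CCr u)) := by
  unfold ca crs
  rw [cb_last_total u]
  by_cases h : u (lastF : Fin n) = 2 <;> by_cases ho : Odd (cb u (lastF : Fin n)) <;>
    simp [h, ho, Nat.odd_add_one]

theorem i_eq_last {i : Fin n} (h : ¬ i.val + 1 < n) : i = lastF := by
  apply Fin.ext
  have := i.isLt
  show i.val = n - 1
  omega

theorem caB (heven : Even (CCr u)) (i : Fin n) :
    ca u (i + 1) = Bool.xor (ca u i) (crs u i) := by
  by_cases hlt : i.val + 1 < n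
  · exact ca_succ u hlt
  · obtain rfl : i = lastF := i_eq_last hlt
    rw [last_add_one, ca_zero, xor_last]
    simp [Nat.not_odd_iff_even.mpr heven]

end RingAux3
namespace RingAux3
open RingAux RingAux2

set_option linter.unusedSectionVars false

variable {n : ℕ} [NeZero n] (u : Fin n → Fin 3)

theorem fBval_def (i : Fin n) (j : Fin 4) :
    fBval u (i, j) = Bool.xor (ca u i) (bitv (crs u i) j) := rfl

theorem bitv_mat : ∀ (k : Fin 3), k ≠ 0 → ∀ j,
    bitv (decide (k = 2)) (mat k j) = bitv (decide (k = 2)) j := by decide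

theorem fB_p (hNC : ∀ s, u s ≠ 0) (i : Fin n) (j : Fin 4) :
    fBval u (i, mat (u i) j) = fBval u (i, j) :=
  congrArg (Bool.xor (ca u i)) (bitv_mat (u i) (hNC i) j)

theorem fB_e2 (heven : Even (CCr u)) (i : Fin n) : fBval u (i + 1, 0) = fBval u (i, 2) := by
  rw [fBval_def, fBval_def]
  show Bool.xor (ca u (i + 1)) false = Bool.xor (ca u i) (crs u i)
  rw [Bool.xor_false, caB u heven]

theorem fB_e3 (heven : Even (CCr u)) (i : Fin n) : fBval u (i + 1, 1) = fBval u (i, 3) := by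
  rw [fBval_def, fBval_def]
  show Bool.xor (ca u (i + 1)) true = Bool.xor (ca u i) (!(crs u i))
  rw [caB u heven]
  cases ca u i <;> cases crs u i <;> rfl

theorem fB_e0 (heven : Even (CCr u)) (i : Fin n) : fBval u (i, 0) = fBval u (i - 1, 2) := by
  have h := fB_e2 u heven (i - 1)
  rw [sub_add_cancel] at h
  exact h

theorem fB_e1 (heven : Even (CCr u)) (i : Fin n) : fBval u (i, 1) = fBval u (i - 1, 3) := by
  have h := fB_e3 u heven (i - 1)
  rw [sub_add_cancel] at h
  exact h

theorem fB_dstep (hn : 1 ≤ n) (hNC : ∀ s, u s ≠ 0) (heven : Even (CCr u)) :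
    ∀ a b, (ringGraph n hn).dstep (D hn u) a b → fBval u a = fBval u b := by
  rintro ⟨i, j⟩ b (rfl | rfl)
  · fin_cases j
    · exact fB_e0 u heven i
    · exact fB_e1 u heven i
    · exact (fB_e2 u heven i).symm
    · exact (fB_e3 u heven i).symm
  · exact (fB_p u hNC i j).symm

/-- target representative of the class of `h` (cases B and C). -/
def tgt (h : Fin n × Fin 4) : Fin n × Fin 4 := ((0 : Fin n), if fBval u h then 1 else 0)

theorem glue {hn : 1 ≤ n} {a b : Fin n × Fin 4} (hab : Rl hn u a b)
    (hf : fBval u a = fBval u b) (hb : Rl hn u b (tgt u b)) : Rl hn u a (tgt u a) := by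
  have h : tgt u a = tgt u b := by unfold tgt; rw [hf]
  rw [h]
  exact Rl.trans hab hb

theorem fB00 : fBval u ((0 : Fin n), 0) = false := by
  rw [fBval_def]
  show Bool.xor (ca u 0) false = false
  rw [Bool.xor_false, ca_zero]

theorem fB01 : fBval u ((0 : Fin n), 1) = true := by
  rw [fBval_def]
  show Bool.xor (ca u 0) true = true
  rw [ca_zero]
  rfl

theorem connB (hn : 1 ≤ n) (hNC : ∀ s, u s ≠ 0) :
    ∀ (m : ℕ) (i : Fin n), i.val = m → ∀ j, Rl hn u (i, j) (tgt u (i, j)) := by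
  have hu12 : ∀ k : Fin 3, k ≠ 0 → k = 1 ∨ k = 2 := by decide
  intro m
  induction m with
  | zero =>
    intro i hi j
    obtain rfl : i = 0 := Fin.ext (by rw [hi]; exact (Fin.val_zero n).symm)
    have b0 : Rl hn u ((0 : Fin n), 0) (tgt u ((0 : Fin n), 0)) := by
      show Rl hn u ((0 : Fin n), 0) ((0 : Fin n), if fBval u ((0 : Fin n), 0) then 1 else 0)
      rw [fB00]
      exact Rl.refl u _
    have b1 : Rl hn u ((0 : Fin n), 1) (tgt u ((0 : Fin n), 1)) := by
      show Rl hn u ((0 : Fin n), 1) ((0 : Fin n), if fBval u ((0 : Fin n), 1) then 1 else 0)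
      rw [fB01]
      exact Rl.refl u _
    have b2 : Rl hn u ((0 : Fin n), 2) (tgt u ((0 : Fin n), 2)) := by
      refine glue u (Rl.rp (a := ((0 : Fin n), 2)) (b := ((0 : Fin n), mat (u 0) 2)) rfl)
        (fB_p u hNC 0 2).symm ?_
      rcases hu12 (u 0) (hNC 0) with h | h <;> rw [h]
      · exact b0
      · exact b1
    have b3 : Rl hn u ((0 : Fin n), 3) (tgt u ((0 : Fin n), 3)) := by
      refine glue u (Rl.rp (a := ((0 : Fin n), 3)) (b := ((0 : Fin n), mat (u 0) 3)) rfl)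
        (fB_p u hNC 0 3).symm ?_
      rcases hu12 (u 0) (hNC 0) with h | h <;> rw [h]
      · exact b1
      · exact b0
    fin_cases j
    · exact b0
    · exact b1
    · exact b2
    · exact b3
  | succ m IH =>
    intro i hi j
    have hmn : m + 1 < n := by rw [← hi]; exact i.isLt
    set i' : Fin n := ⟨m, by omega⟩ with hi'
    have hplus : i' + 1 = i := by
      apply Fin.ext
      rw [valSucc (by show m + 1 < n; omega), hi]
    have hIH := IH i' rfl
    have hca : ca u i = Bool.xor (ca u i') (crs u i') := by
      rw [← hplus, ca_succ u (by show m + 1 < n; omega)]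
    have h0 : Rl hn u (i, 0) (tgt u (i, 0)) := by
      refine glue u (Rl.symm (Rl.re (by rw [edg2 hn i', hplus]))) ?_ (hIH 2)
      rw [fBval_def, fBval_def]
      show Bool.xor (ca u i) false = Bool.xor (ca u i') (crs u i')
      rw [Bool.xor_false, hca]
    have h1 : Rl hn u (i, 1) (tgt u (i, 1)) := by
      refine glue u (Rl.symm (Rl.re (by rw [edg3 hn i', hplus]))) ?_ (hIH 3)
      rw [fBval_def, fBval_def]
      show Bool.xor (ca u i) true = Bool.xor (ca u i') (!(crs u i'))
      rw [hca]
      cases ca u i' <;> cases crs u i' <;> rfl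
    have h2 : Rl hn u (i, 2) (tgt u (i, 2)) := by
      refine glue u (Rl.rp (a := (i, 2)) (b := (i, mat (u i) 2)) rfl)
        (fB_p u hNC i 2).symm ?_
      rcases hu12 (u i) (hNC i) with h | h <;> rw [h]
      · exact h0
      · exact h1
    have h3 : Rl hn u (i, 3) (tgt u (i, 3)) := by
      refine glue u (Rl.rp (a := (i, 3)) (b := (i, mat (u i) 3)) rfl)
        (fB_p u hNC i 3).symm ?_
      rcases hu12 (u i) (hNC i) with h | h <;> rw [h]
      · exact h1
      · exact h0
    fin_cases j
    · exact h0
    · exact h1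
    · exact h2
    · exact h3

theorem ncB (hn : 1 ≤ n) (hNC : ∀ s, u s ≠ 0) (heven : Even (CCr u)) :
    (ringGraph n hn).ncircuits (D hn u) = 2 := by
  rw [nc_eq hn]
  have h := class_count ((ringGraph n hn).dsetoid (D hn u)) (fBval u)
      (fun b => (((0 : Fin n), if b then 1 else 0) : Fin n × Fin 4))
      (eqvgen_lift (fB_dstep u hn hNC heven))
      (fun b => by cases b
                   · exact fB00 u
                   · exact fB01 u)
      (fun a => by
        obtain ⟨i, j⟩ := a
        exact connB u hn hNC i.val i rfl j)
  rw [show (ringGraph n hn).Circuits (D hn u) =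
      Quotient ((ringGraph n hn).dsetoid (D hn u)) from rfl, h, Fintype.card_bool]

theorem ncC (hn : 1 ≤ n) (hNC : ∀ s, u s ≠ 0) (hodd : Odd (CCr u)) :
    (ringGraph n hn).ncircuits (D hn u) = 1 := by
  rw [nc_eq hn]
  have hkey : Rl hn u ((0 : Fin n), 1) ((0 : Fin n), 0) := by
    have h1 : Rl hn u ((lastF : Fin n), 2) ((0 : Fin n), 0) :=
      Rl.re (by rw [edg2 hn, last_add_one])
    have h2 : Rl hn u ((lastF : Fin n), 2) (tgt u ((lastF : Fin n), 2)) :=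
      connB u hn hNC _ _ rfl 2
    have hfv : fBval u ((lastF : Fin n), 2) = true := by
      rw [fBval_def]
      show Bool.xor (ca u (lastF : Fin n)) (crs u (lastF : Fin n)) = true
      rw [xor_last]
      simpa using hodd
    rw [show tgt u ((lastF : Fin n), 2) = ((0 : Fin n), 1) from by
      unfold tgt; rw [hfv]; rfl] at h2
    exact Rl.trans (Rl.symm h2) h1
  have h := class_count ((ringGraph n hn).dsetoid (D hn u)) (fun _ => PUnit.unit)
      (fun _ => (((0 : Fin n), 0) : Fin n × Fin 4))
      (fun a b _ => rfl)
      (fun x => rfl)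
      (fun a => by
        obtain ⟨i, j⟩ := a
        have ht := connB u hn hNC i.val i rfl j
        rcases hb : fBval u (i, j) with _ | _
        · rw [show tgt u (i, j) = ((0 : Fin n), 0) from by unfold tgt; rw [hb]; rfl] at ht
          exact ht
        · rw [show tgt u (i, j) = ((0 : Fin n), 1) from by unfold tgt; rw [hb]; rfl] at ht
          exact Rl.trans ht hkey)
  rw [show (ringGraph n hn).Circuits (D hn u) =
      Quotient ((ringGraph n hn).dsetoid (D hn u)) from rfl, h]
  exact Fintype.card_punit

end RingAux3
namespace RingAux4
open RingAux RingAux2 RingAux3 Polynomial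

set_option linter.unusedSectionVars false

variable {n : ℕ} [NeZero n]

theorem nc_formula (hn : 1 ≤ n) (u : Fin n → Fin 3) :
    (ringGraph n hn).ncircuits (D hn u) =
      if SU u = ∅ then (if Even (CCr u) then 2 else 1) else (SU u).card := by
  by_cases hSU : SU u = ∅
  · have hNC : ∀ s, u s ≠ 0 := fun s hs =>
      (Finset.filter_eq_empty_iff.mp hSU) (Finset.mem_univ s) hs
    rw [if_pos hSU]
    by_cases he : Even (CCr u)
    · rw [if_pos he]
      exact ncB u hn hNC he
    · rw [if_neg he]
      exact ncC u hn hNC (Nat.not_even_iff_odd.mp he)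
  · rw [if_neg hSU]
    obtain ⟨s, hs⟩ := Finset.nonempty_iff_ne_empty.mpr hSU
    exact ncA u hn ⟨s, (Finset.mem_filter.mp hs).2⟩

theorem prod_ind0 (u : Fin n → Fin 3) :
    (∏ i : Fin n, if u i = 0 then (0:ℤ) else 1) = if SU u = ∅ then 1 else 0 := by
  by_cases h : SU u = ∅
  · rw [if_pos h]
    apply Finset.prod_eq_one
    intro i _
    rw [if_neg (Finset.filter_eq_empty_iff.mp h (Finset.mem_univ i))]
  · rw [if_neg h]
    obtain ⟨s, hs⟩ := Finset.nonempty_iff_ne_empty.mpr h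
    exact Finset.prod_eq_zero (Finset.mem_univ s)
      (by rw [if_pos (Finset.mem_filter.mp hs).2])

theorem prod_neg (u : Fin n → Fin 3) :
    (∏ i : Fin n, if u i = 2 then (-1:ℤ) else 1) = (-1)^(CCr u) := by
  have h1 : ∀ i : Fin n, (if u i = 2 then (-1:ℤ) else 1) = (-1)^(if u i = 2 then 1 else 0) := by
    intro i
    split_ifs <;> simp
  rw [Finset.prod_congr rfl (fun i _ => h1 i), Finset.prod_pow_eq_pow_sum]
  congr 1
  rw [CCr, Finset.card_filter]

theorem sum_prod_w {β : Type} [CommSemiring β] (w : Fin 3 → β) :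
    ∑ u : Fin n → Fin 3, ∏ i : Fin n, w (u i) = (w 0 + w 1 + w 2)^n := by
  rw [← Fintype.piFinset_univ, ← Finset.prod_univ_sum]
  rw [Finset.prod_congr rfl (fun (i : Fin n) _ => Fin.sum_univ_three w), Finset.prod_const,
    Finset.card_univ, Fintype.card_fin]

theorem cardA : (((Finset.univ.filter (fun u : Fin n → Fin 3 => SU u = ∅)).card : ℤ)) = 2^n := by
  have h1 := sum_prod_w (n := n) (β := ℤ) ![0, 1, 1]
  have h2 : ∀ u : Fin n → Fin 3, (∏ i : Fin n, (![(0:ℤ), 1, 1]) (u i)) =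
      if SU u = ∅ then (1:ℤ) else 0 := by
    intro u
    rw [← prod_ind0 u]
    apply Finset.prod_congr rfl
    intro i _
    have : ∀ k : Fin 3, (![(0:ℤ), 1, 1]) k = if k = 0 then 0 else 1 := by decide
    exact this (u i)
  rw [Finset.sum_congr rfl (fun u _ => h2 u), Finset.sum_boole,
    show (![(0:ℤ), 1, 1]) 0 + (![(0:ℤ), 1, 1]) 1 + (![(0:ℤ), 1, 1]) 2 = 2 from by decide] at h1
  exact h1

theorem diff0 :
    (((Finset.univ.filter (fun u : Fin n → Fin 3 => SU u = ∅ ∧ Even (CCr u))).card : ℤ)) =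
    (((Finset.univ.filter (fun u : Fin n → Fin 3 => SU u = ∅ ∧ ¬ Even (CCr u))).card : ℤ)) := by
  have h1 := sum_prod_w (n := n) (β := ℤ) ![0, 1, -1]
  have h2 : ∀ u : Fin n → Fin 3, (∏ i : Fin n, (![(0:ℤ), 1, -1]) (u i)) =
      (if SU u = ∅ ∧ Even (CCr u) then (1:ℤ) else 0) -
      (if SU u = ∅ ∧ ¬ Even (CCr u) then (1:ℤ) else 0) := by
    intro u
    have hfac : ∀ k : Fin 3, (![(0:ℤ), 1, -1]) k =
        (if k = 0 then 0 else 1) * (if k = 2 then -1 else 1) := by decide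
    rw [Finset.prod_congr rfl (fun i _ => hfac (u i)), Finset.prod_mul_distrib,
      prod_ind0 u, prod_neg u]
    by_cases h : SU u = ∅
    · by_cases he : Even (CCr u)
      · rw [if_pos h, if_pos ⟨h, he⟩, if_neg (fun hc => hc.2 he), he.neg_one_pow]
        ring
      · rw [if_pos h, if_neg (fun hc => he hc.2), if_pos ⟨h, he⟩,
          (Nat.not_even_iff_odd.mp he).neg_one_pow]
        ring
    · rw [if_neg h, if_neg (fun hc => h hc.1), if_neg (fun hc => h hc.1)]
      ring
  rw [Finset.sum_congr rfl (fun u _ => h2 u), Finset.sum_sub_distrib,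
    Finset.sum_boole, Finset.sum_boole] at h1
  rw [show (![(0:ℤ), 1, -1]) 0 + (![(0:ℤ), 1, -1]) 1 + (![(0:ℤ), 1, -1]) 2 = 0 from by decide,
    zero_pow (by have := Nat.pos_of_ne_zero (NeZero.ne n); omega)] at h1
  linarith [h1]

theorem card_even : (Finset.univ.filter (fun u : Fin n → Fin 3 => SU u = ∅ ∧ Even (CCr u))).card
    = 2^(n-1) ∧
    (Finset.univ.filter (fun u : Fin n → Fin 3 => SU u = ∅ ∧ ¬ Even (CCr u))).card = 2^(n-1) := by
  have hpos := Nat.pos_of_ne_zero (NeZero.ne n)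
  set c1 := (Finset.univ.filter (fun u : Fin n → Fin 3 => SU u = ∅ ∧ Even (CCr u))).card with hc1
  set c2 := (Finset.univ.filter (fun u : Fin n → Fin 3 => SU u = ∅ ∧ ¬ Even (CCr u))).card with hc2
  have heq : c1 = c2 := by exact_mod_cast diff0 (n := n)
  have hsum : c1 + c2 = 2^n := by
    have hpt : ∀ u : Fin n → Fin 3, (if SU u = ∅ then (1:ℤ) else 0) =
        (if SU u = ∅ ∧ Even (CCr u) then (1:ℤ) else 0) +
        (if SU u = ∅ ∧ ¬ Even (CCr u) then (1:ℤ) else 0) := by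
      intro u
      by_cases h : SU u = ∅ <;> by_cases he : Even (CCr u) <;> simp [h, he]
    have hzz : ((c1 : ℤ)) + ((c2 : ℤ)) = ((2:ℤ))^n := by
      rw [hc1, hc2, ← Finset.sum_boole, ← Finset.sum_boole, ← Finset.sum_add_distrib,
        ← Finset.sum_congr rfl (fun u _ => hpt u), Finset.sum_boole, cardA]
    exact_mod_cast hzz
  have h2n : 2^n = 2^(n-1) + 2^(n-1) := by
    rw [← two_mul, ← pow_succ']
    congr 1
    omega
  omega

end RingAux4
namespace RingAux4
open RingAux RingAux2 RingAux3 Polynomial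

set_option linter.unusedSectionVars false

theorem J_ring (n : ℕ) (hn : 1 ≤ n) :
    (ringGraph n hn).J =
      Polynomial.C ((2 : ℤ) ^ (n - 1)) * (Polynomial.X - 1) *
          (Polynomial.X + Polynomial.C (2 : ℤ)) +
        (Polynomial.X + Polynomial.C (2 : ℤ)) ^ n := by
  haveI : NeZero n := ⟨by omega⟩
  unfold HGraph.J
  rw [← Equiv.sum_comp (UEquiv hn) (fun d => (X : ℤ[X]) ^ (ringGraph n hn).ncircuits d)]
  simp only [UEquiv, Equiv.coe_fn_mk]
  have hpt : ∀ u : Fin n → Fin 3,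
      (X : ℤ[X]) ^ (ringGraph n hn).ncircuits (D hn u) =
        X ^ ((SU u).card) +
        ((if SU u = ∅ ∧ Even (CCr u) then (X : ℤ[X]) ^ 2 - 1 else 0) +
         (if SU u = ∅ ∧ ¬ Even (CCr u) then (X : ℤ[X]) - 1 else 0)) := by
    intro u
    rw [nc_formula hn u]
    by_cases h : SU u = ∅ <;> by_cases he : Even (CCr u)
    · rw [if_pos h, if_pos he, if_pos ⟨h, he⟩, if_neg (fun hc => hc.2 he), h]
      simp
    · rw [if_pos h, if_neg he, if_neg (fun hc => he hc.2), if_pos ⟨h, he⟩, h]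
      simp
    · rw [if_neg h, if_neg (fun hc => h hc.1), if_neg (fun hc => h hc.1)]
      ring
    · rw [if_neg h, if_neg (fun hc => h hc.1), if_neg (fun hc => h hc.1)]
      ring
  have hS1 : ∑ u : Fin n → Fin 3, (X : ℤ[X]) ^ ((SU u).card) =
      (X + Polynomial.C (2 : ℤ)) ^ n := by
    have hxc : ∀ u : Fin n → Fin 3, (X : ℤ[X]) ^ ((SU u).card) =
        ∏ i : Fin n, (if u i = 0 then (X : ℤ[X]) else 1) := by
      intro u
      rw [SU, Finset.card_filter, ← Finset.prod_pow_eq_pow_sum]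
      apply Finset.prod_congr rfl
      intro i _
      split_ifs <;> simp
    rw [Finset.sum_congr rfl (fun u _ => hxc u),
      sum_prod_w (fun k : Fin 3 => if k = 0 then (X : ℤ[X]) else 1)]
    rw [if_pos rfl, if_neg (by decide : ¬ (1 : Fin 3) = 0), if_neg (by decide : ¬ (2 : Fin 3) = 0)]
    have hc2 : Polynomial.C (2 : ℤ) = (2 : ℤ[X]) := by norm_num
    rw [hc2]
    ring_nf
  rw [Finset.sum_congr rfl (fun u _ => hpt u), Finset.sum_add_distrib, hS1,
    Finset.sum_add_distrib, ← Finset.sum_filter, ← Finset.sum_filter,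
    Finset.sum_const, Finset.sum_const,
    (card_even (n := n)).1, (card_even (n := n)).2, nsmul_eq_mul, nsmul_eq_mul]
  have hc2 : Polynomial.C (2 : ℤ) = (2 : ℤ[X]) := by norm_num
  have hcp : Polynomial.C ((2 : ℤ) ^ (n - 1)) = (2 : ℤ[X]) ^ (n - 1) := by
    rw [map_pow, hc2]
  have hnc : ((2 ^ (n - 1) : ℕ) : ℤ[X]) = (2 : ℤ[X]) ^ (n - 1) := by
    push_cast
    ring
  rw [hcp, hnc, hc2]
  ring

end RingAux4
/-- For every `L ≥ 3`, the vacuum graph `R_L` — a ring of `L-1`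
four-valent vertices arranged in a cycle with consecutive vertices joined by double
edges (for `L = 3`, two vertices joined by four parallel edges) — has circuit
partition polynomial `J(R_L, N) = 2^(L-2)·(N-1)·(N+2) + (N+2)^(L-1)`. -/
theorem bubble_ring_circuit_partition (L : ℕ) (hL : 3 ≤ L) :
    (ringGraph (L - 1) (by omega)).J =
      Polynomial.C ((2 : ℤ) ^ (L - 2)) * (Polynomial.X - 1) *
          (Polynomial.X + Polynomial.C (2 : ℤ)) +
        (Polynomial.X + Polynomial.C (2 : ℤ)) ^ (L - 1) := by
  have h := RingAux4.J_ring (L - 1) (by omega)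
  rw [show L - 2 = (L - 1) - 1 from by omega]
  exact h
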